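/- arXiv:1412.0958 — 3 statements merged into one kernel-verified Lean document; each statement's English description precedes it below -/
import Mathlib

section
/- Let $(X_\sigma)_{\sigma=1}^{2^N}$ be i.i.d. centered Gaussians of variance $N$. Then $\frac{1}{N}\max_{\sigma \le 2^N} X_\sigma \to \sqrt{2\log 2}$ in probability as $N \to \infty$. -/
open MeasureTheory ProbabilityTheory Real Filter
open scoped NNReal ENNReal Topology

/-!
Write `β = √(2 log 2)`, so that `2 ^ N = exp (β ^ 2 N / 2)`. Above `(β + δ) N`: by the union bound
and the Gaussian tail bound `exp (-t ^ 2 / 2N)`, the maximum exceeds it with probability at most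
`2 ^ N exp (-(β + δ) ^ 2 N / 2) = exp (-(β δ + δ ^ 2 / 2) N)`. Below `(β - δ) N`: by
independence the maximum stays below it with probability `(1 - q) ^ 2 ^ N ≤ exp (-2 ^ N q)`, where
the tail `q` is at least the Gaussian density at `(β - δ) N + 1`, so
`2 ^ N q ≳ exp ((β δ - δ ^ 2 / 2) N) / N → ∞`.
-/

section MaxOfFiniteFamily

variable {Ω ι : Type*} [MeasurableSpace Ω] {μ : Measure Ω} [Fintype ι] [Nonempty ι]

lemma measureReal_lt_iSup_le_sum [IsFiniteMeasure μ] (X : ι → Ω → ℝ) (t : ℝ) :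
    μ.real {ω | t < ⨆ i, X i ω} ≤ ∑ i, μ.real {ω | t ≤ X i ω} := by
  refine (measureReal_mono fun ω hω ↦ ?_).trans (measureReal_iUnion_fintype_le _)
  obtain ⟨i, hi⟩ := exists_eq_ciSup_of_finite (f := fun i ↦ X i ω)
  exact Set.mem_iUnion.2 ⟨i, (hi.trans_gt hω).le⟩

lemma ProbabilityTheory.iIndepFun.measure_iSup_lt_eq_prod {X : ι → Ω → ℝ} (h : iIndepFun X μ)
    (t : ℝ) :
    μ {ω | ⨆ i, X i ω < t} = ∏ i, μ {ω | X i ω < t} := by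
  have hmax : {ω | ⨆ i, X i ω < t} = ⋂ i, X i ⁻¹' Set.Iio t := by
    ext ω
    obtain ⟨j, hj⟩ := exists_eq_ciSup_of_finite (f := fun i ↦ X i ω)
    simp only [Set.mem_ofPred_eq, Set.mem_iInter, Set.mem_preimage, Set.mem_Iio]
    exact ⟨fun h i ↦ (le_ciSup (Set.finite_range _).bddAbove i).trans_lt h, fun h ↦ hj ▸ h j⟩
  rw [hmax, h.meas_iInter fun i ↦ ⟨Set.Iio t, measurableSet_Iio, rfl⟩]
  rfl

lemma ProbabilityTheory.iIndepFun.measureReal_iSup_lt_le_exp {X : ι → Ω → ℝ} {ν : Measure ℝ}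
    [IsProbabilityMeasure ν] (h : iIndepFun X μ) (hlaw : ∀ i, μ.map (X i) = ν) (t : ℝ) :
    μ.real {ω | ⨆ i, X i ω < t} ≤ exp (-(Fintype.card ι * ν.real (Set.Ici t))) := by
  have hX i : μ {ω | X i ω < t} = ν (Set.Iio t) := by
    rw [← hlaw i, Measure.map_apply_of_aemeasurable
      (aemeasurable_of_map_neZero (by rw [hlaw i]; infer_instance)) measurableSet_Iio]
    rfl
  have hcompl : ν.real (Set.Iio t) = 1 - ν.real (Set.Ici t) := by
    rw [← Set.compl_Ici, probReal_compl_eq_one_sub measurableSet_Ici]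
  calc μ.real {ω | ⨆ i, X i ω < t}
      = (1 - ν.real (Set.Ici t)) ^ Fintype.card ι := by
        rw [measureReal_def, h.measure_iSup_lt_eq_prod, Finset.prod_congr rfl fun i _ ↦ hX i,
          Finset.prod_const, Finset.card_univ, ENNReal.toReal_pow, ← measureReal_def, hcompl]
    _ ≤ exp (-ν.real (Set.Ici t)) ^ Fintype.card ι := by
        gcongr
        · rw [← hcompl]; exact measureReal_nonneg
        · exact one_sub_le_exp_neg _
    _ = exp (-(Fintype.card ι * ν.real (Set.Ici t))) := by
        rw [← exp_nat_mul, mul_neg]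

end MaxOfFiniteFamily

lemma hasSubgaussianMGF_of_map_eq_gaussianReal {Ω : Type*} [MeasurableSpace Ω] {μ : Measure Ω}
    {X : Ω → ℝ} {v : ℝ≥0} (hX : μ.map X = gaussianReal 0 v) : HasSubgaussianMGF X v μ where
  integrable_exp_mul t := by
    have : NeZero μ :=
      ⟨fun h0 ↦ IsProbabilityMeasure.ne_zero (gaussianReal 0 v) <| by
        rw [← hX, h0, Measure.map_zero]⟩
    rw [← mgf_pos_iff, mgf_gaussianReal hX]
    exact exp_pos _
  mgf_le t := by rw [mgf_gaussianReal hX, zero_mul, zero_add]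

lemma gaussianPDFReal_antitoneOn (v : ℝ≥0) : AntitoneOn (gaussianPDFReal 0 v) (Set.Ici 0) := by
  intro x hx y _ hxy
  simp only [gaussianPDFReal, sub_zero]
  gcongr

lemma gaussianPDFReal_add_one_le_measureReal_Ici {v : ℝ≥0} (hv : v ≠ 0) {a : ℝ} (ha : 0 ≤ a) :
    gaussianPDFReal 0 v (a + 1) ≤ (gaussianReal 0 v).real (Set.Ici a) := by
  calc gaussianPDFReal 0 v (a + 1)
      = gaussianPDFReal 0 v (a + 1) * volume.real (Set.Icc a (a + 1)) := by simp
    _ ≤ ∫ x in Set.Icc a (a + 1), gaussianPDFReal 0 v x :=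
        setIntegral_ge_of_const_le_real measurableSet_Icc (by simp)
          (fun x hx ↦ gaussianPDFReal_antitoneOn v (ha.trans hx.1) (by simp; linarith) hx.2)
          (integrable_gaussianPDFReal 0 v).integrableOn
    _ = (gaussianReal 0 v).real (Set.Icc a (a + 1)) := by
        rw [measureReal_def, gaussianReal_apply_eq_integral 0 hv,
          ENNReal.toReal_ofReal (setIntegral_nonneg measurableSet_Icc
            fun x _ ↦ gaussianPDFReal_nonneg 0 v x)]
    _ ≤ (gaussianReal 0 v).real (Set.Ici a) := measureReal_mono Set.Icc_subset_Ici_self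

lemma two_pow_mul_exp_neg_sq {N : ℕ} (hN : N ≠ 0) (γ s : ℝ) :
    (2 : ℝ) ^ N * exp (-(γ * N + s) ^ 2 / (2 * N)) =
      exp ((log 2 - γ ^ 2 / 2) * N - γ * s - s ^ 2 / (2 * N)) := by
  rw [← exp_log (by norm_num : (0 : ℝ) < 2), ← exp_nat_mul, exp_log two_pos, ← exp_add]
  congr 1
  field_simp
  ring

lemma tendsto_two_pow_mul_exp_neg_sq {γ : ℝ} (hγ : 2 * log 2 < γ ^ 2) :
    Tendsto (fun N : ℕ ↦ (2 : ℝ) ^ N * exp (-(γ * N) ^ 2 / (2 * N))) atTop (𝓝 0) := by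
  have hrate : Tendsto (fun N : ℕ ↦ exp ((log 2 - γ ^ 2 / 2) * N)) atTop (𝓝 0) :=
    tendsto_exp_atBot.comp <| tendsto_natCast_atTop_atTop.const_mul_atTop_of_neg (by linarith)
  refine hrate.congr' <| eventually_ne_atTop 0 |>.mono fun N hN ↦ ?_
  simpa using (two_pow_mul_exp_neg_sq hN γ 0).symm

lemma tendsto_two_pow_mul_gaussianPDFReal {γ : ℝ} (hγ : γ ^ 2 < 2 * log 2) :
    Tendsto (fun N : ℕ ↦ (2 : ℝ) ^ N * gaussianPDFReal 0 N (γ * N + 1)) atTop atTop := by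
  set c := log 2 - γ ^ 2 / 2
  have hc : 0 < c := by simp only [c]; linarith
  have hrate : Tendsto (fun N : ℕ ↦ exp (-γ - 1) / (2 * π) * (exp (c * N) / N)) atTop atTop := by
    refine Tendsto.const_mul_atTop (by positivity) ?_
    simpa [Function.comp_def] using
      (tendsto_exp_mul_div_rpow_atTop 1 c hc).comp tendsto_natCast_atTop_atTop
  refine tendsto_atTop_mono' _ (eventually_ge_atTop 1 |>.mono fun N hN ↦ ?_) hrate
  have hN0 : (1 : ℝ) ≤ N := by exact_mod_cast hN
  have hsqrt : √(2 * π * N) ≤ 2 * π * N := sqrt_le_self_iff.2 <| .inr (by nlinarith [pi_gt_three])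
  have hexp : exp (-γ - 1) * exp (c * N) ≤ exp (c * N - γ * 1 - 1 ^ 2 / (2 * N)) := by
    rw [← exp_add, exp_le_exp]
    have : 1 / (2 * (N : ℝ)) ≤ 1 := by rw [div_le_one (by positivity)]; linarith
    linarith
  calc exp (-γ - 1) / (2 * π) * (exp (c * N) / N)
      = (2 * π * N)⁻¹ * (exp (-γ - 1) * exp (c * N)) := by field_simp
    _ ≤ (√(2 * π * N))⁻¹ * exp (c * N - γ * 1 - 1 ^ 2 / (2 * N)) := by
        gcongr
    _ = (2 : ℝ) ^ N * gaussianPDFReal 0 N (γ * N + 1) := by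
        rw [gaussianPDFReal, NNReal.coe_natCast, sub_zero, mul_left_comm,
          two_pow_mul_exp_neg_sq (by omega)]

section RandomEnergyModel

variable {Ω : Type*} [MeasurableSpace Ω] {μ : Measure Ω} {X : (N : ℕ) → Fin (2 ^ N) → Ω → ℝ}

lemma tendsto_measureReal_mul_lt_iSup [IsFiniteMeasure μ]
    (hlaw : ∀ N σ, Measure.map (X N σ) μ = gaussianReal 0 N) {γ : ℝ} (hγ₀ : 0 ≤ γ)
    (hγ : 2 * log 2 < γ ^ 2) :
    Tendsto (fun N : ℕ ↦ μ.real {ω | γ * N < ⨆ σ, X N σ ω}) atTop (𝓝 0) := by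
  refine squeeze_zero (fun _ ↦ measureReal_nonneg) (fun N ↦ ?_) (tendsto_two_pow_mul_exp_neg_sq hγ)
  calc μ.real {ω | γ * N < ⨆ σ, X N σ ω}
      ≤ ∑ σ, μ.real {ω | γ * N ≤ X N σ ω} := measureReal_lt_iSup_le_sum _ _
    _ ≤ ∑ _σ : Fin (2 ^ N), exp (-(γ * N) ^ 2 / (2 * N)) := by
        gcongr with σ
        simpa using (hasSubgaussianMGF_of_map_eq_gaussianReal (hlaw N σ)).measure_ge_le
          (mul_nonneg hγ₀ N.cast_nonneg)
    _ = (2 : ℝ) ^ N * exp (-(γ * N) ^ 2 / (2 * N)) := by simp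

lemma tendsto_measureReal_iSup_lt_mul (hindep : ∀ N, iIndepFun (X N) μ)
    (hlaw : ∀ N σ, Measure.map (X N σ) μ = gaussianReal 0 N) {γ : ℝ} (hγ₀ : 0 ≤ γ)
    (hγ : γ ^ 2 < 2 * log 2) :
    Tendsto (fun N : ℕ ↦ μ.real {ω | ⨆ σ, X N σ ω < γ * N}) atTop (𝓝 0) := by
  have htail : Tendsto (fun N : ℕ ↦ (2 : ℝ) ^ N * (gaussianReal 0 N).real (Set.Ici (γ * N)))
      atTop atTop := by
    refine tendsto_atTop_mono' _ (eventually_ne_atTop 0 |>.mono fun N hN ↦ ?_)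
      (tendsto_two_pow_mul_gaussianPDFReal hγ)
    exact mul_le_mul_of_nonneg_left (gaussianPDFReal_add_one_le_measureReal_Ici (by simpa using hN)
      (mul_nonneg hγ₀ N.cast_nonneg)) (by positivity)
  refine squeeze_zero (fun _ ↦ measureReal_nonneg) (fun N ↦ ?_)
    (tendsto_exp_atBot.comp (tendsto_neg_atTop_atBot.comp htail))
  simpa using (hindep N).measureReal_iSup_lt_le_exp (hlaw N) (γ * N)

end RandomEnergyModel

lemma lt_or_lt_of_lt_abs_one_div_mul_sub {N M β δ ε : ℝ} (hN : 0 < N) (hδε : δ ≤ ε)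
    (h : ε < |1 / N * M - β|) : (β + δ) * N < M ∨ M < (β - δ) * N := by
  rw [one_div_mul_eq_div] at h
  rcases lt_abs.1 h with h | h
  · exact .inl <| (lt_div_iff₀ hN).1 (by linarith)
  · exact .inr <| (div_lt_iff₀ hN).1 (by linarith)

theorem stmt3_general
    (Ω : Type) [MeasureSpace Ω] [IsProbabilityMeasure (ℙ : Measure Ω)]
    (X : (N : ℕ) → Fin (2 ^ N) → Ω → ℝ)
    (hindep : ∀ N, iIndepFun (X N) ℙ)
    (hlaw : ∀ N σ, Measure.map (X N σ) ℙ = gaussianReal 0 N) :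
    ∀ ε : ℝ, 0 < ε →
      Tendsto (fun N : ℕ =>
          ℙ {ω | ε < |(1 / (N : ℝ)) * (⨆ σ, X N σ ω) - Real.sqrt (2 * Real.log 2)|})
        atTop (nhds 0) := by
  intro ε hε
  set β := √(2 * log 2)
  have hβ : 0 < β := sqrt_pos.2 (by positivity)
  have hβsq : β ^ 2 = 2 * log 2 := sq_sqrt (by positivity)
  set δ := min ε (β / 2)
  have hδ : 0 < δ := lt_min hε (by positivity)
  have hδβ : δ < β := (min_le_right _ _).trans_lt (by linarith)
  have hupper := tendsto_measureReal_mul_lt_iSup hlaw (γ := β + δ) (by positivity) (by nlinarith)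
  have hlower := tendsto_measureReal_iSup_lt_mul hindep hlaw (γ := β - δ) (by linarith)
    (by nlinarith)
  rw [← ENNReal.tendsto_toReal_zero_iff]
  refine squeeze_zero' (.of_forall fun _ ↦ ENNReal.toReal_nonneg) ?_
    (by simpa using hupper.add hlower)
  filter_upwards [eventually_ne_atTop 0] with N hN
  refine (measureReal_mono fun ω hω ↦ ?_).trans (measureReal_union_le _ _)
  exact lt_or_lt_of_lt_abs_one_div_mul_sub (by positivity) (min_le_left _ _) hω

/-- REM leading order: `N⁻¹ max_σ X_σ → √(2 log 2)` in probability. -/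
theorem stmt3
    (Ω : Type) [MeasureSpace Ω] [IsProbabilityMeasure (ℙ : Measure Ω)]
    (X : (N : ℕ) → Fin (2 ^ N) → Ω → ℝ)
    (hmeas : ∀ N σ, Measurable (X N σ))
    (hindep : ∀ N, iIndepFun (X N) ℙ)
    (hlaw : ∀ N σ, Measure.map (X N σ) ℙ = gaussianReal 0 N) :
    ∀ ε : ℝ, 0 < ε →
      Tendsto (fun N : ℕ =>
          ℙ {ω | ε < |(1 / (N : ℝ)) * (⨆ σ, X N σ ω) - Real.sqrt (2 * Real.log 2)|})
        atTop (nhds 0) :=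
  stmt3_general Ω X hindep hlaw
end

section
/- Let $a_1, a_2 > 0$ with $a_1 + a_2 = 1$ and $a_1 \le a_2$. Then the maximum of $\lambda_1 + \lambda_2$ over all $(\lambda_1,\lambda_2) \in \mathbb{R}^2$ satisfying $\frac{\lambda_1^2}{2a_1} \le \frac{1}{2}\log 2$ and $\frac{\lambda_1^2}{2a_1} + \frac{\lambda_2^2}{2a_2} \le \log 2$ equals $\sqrt{2\log 2}$, attained at $\lambda_1 = \sqrt{2\log 2}\,a_1$, $\lambda_2 = \sqrt{2\log 2}\,a_2$. -/
/-!
Sedrakyan's form of Cauchy–Schwarz with weights `2a₁, 2a₂` (summing to `2`) turns the second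
constraint alone into `(λ₁ + λ₂)² ≤ 2 log 2`. The proportional point `λᵢ = √(2 log 2) aᵢ` has
first-level energy `a₁ log 2` and total energy `log 2`, so it saturates this bound, and it
satisfies the first constraint precisely because `a₁ ≤ 1/2`, i.e. `a₁ ≤ a₂`.
-/

open Real

theorem sq_add_div_add_le_add_sq_div {R : Type*} [Semifield R] [LinearOrder R]
    [IsStrictOrderedRing R] [ExistsAddOfLE R] (x y : R) {a b : R} (ha : 0 < a) (hb : 0 < b) :
    (x + y) ^ 2 / (a + b) ≤ x ^ 2 / a + y ^ 2 / b := by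
  simpa [Fin.sum_univ_two] using
    Finset.sq_sum_div_le_sum_sq_div Finset.univ ![x, y] (g := ![a, b])
      (by simp [Fin.forall_fin_two, ha, hb])

theorem add_le_sqrt_of_sq_div_add_sq_div_le {l₁ l₂ a₁ a₂ E : ℝ} (h₁ : 0 < a₁) (h₂ : 0 < a₂)
    (hsum : a₁ + a₂ = 1) (hE : l₁ ^ 2 / (2 * a₁) + l₂ ^ 2 / (2 * a₂) ≤ E) :
    l₁ + l₂ ≤ √(2 * E) := by
  have hsq : (l₁ + l₂) ^ 2 / 2 ≤ E := by
    calc (l₁ + l₂) ^ 2 / 2 = (l₁ + l₂) ^ 2 / (2 * a₁ + 2 * a₂) := by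
          rw [← mul_add, hsum, mul_one]
      _ ≤ l₁ ^ 2 / (2 * a₁) + l₂ ^ 2 / (2 * a₂) :=
          sq_add_div_add_le_add_sq_div l₁ l₂ (by positivity) (by positivity)
      _ ≤ E := hE
  exact (le_abs_self _).trans (abs_le_sqrt (by linarith))

theorem mul_sq_div_two_mul {K : Type*} [Field K] (s : K) {a : K} (ha : a ≠ 0) :
    (s * a) ^ 2 / (2 * a) = s ^ 2 / 2 * a := by
  field_simp

/-- GREM(2) optimization, regime `a₁ ≤ a₂`: the constrained maximum of `λ₁ + λ₂`
equals `√(2 log 2)`, attained at `λᵢ = √(2 log 2) aᵢ`. -/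
theorem stmt4 (a₁ a₂ : ℝ) (h₁ : 0 < a₁) (h₂ : 0 < a₂) (hsum : a₁ + a₂ = 1)
    (hle : a₁ ≤ a₂) :
    IsGreatest {s : ℝ | ∃ l₁ l₂ : ℝ, s = l₁ + l₂ ∧
        l₁ ^ 2 / (2 * a₁) ≤ (1 / 2) * Real.log 2 ∧
        l₁ ^ 2 / (2 * a₁) + l₂ ^ 2 / (2 * a₂) ≤ Real.log 2}
      (Real.sqrt (2 * Real.log 2))
    ∧ ((Real.sqrt (2 * Real.log 2) * a₁) ^ 2 / (2 * a₁) ≤ (1 / 2) * Real.log 2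
      ∧ (Real.sqrt (2 * Real.log 2) * a₁) ^ 2 / (2 * a₁)
          + (Real.sqrt (2 * Real.log 2) * a₂) ^ 2 / (2 * a₂) ≤ Real.log 2
      ∧ Real.sqrt (2 * Real.log 2) * a₁ + Real.sqrt (2 * Real.log 2) * a₂
          = Real.sqrt (2 * Real.log 2)) := by
  set s := √(2 * log 2)
  have hs : s ^ 2 / 2 = log 2 := by
    rw [sq_sqrt (by positivity)]
    ring
  have energy₁ : (s * a₁) ^ 2 / (2 * a₁) = log 2 * a₁ := by
    rw [mul_sq_div_two_mul s h₁.ne', hs]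
  have energy₂ : (s * a₂) ^ 2 / (2 * a₂) = log 2 * a₂ := by
    rw [mul_sq_div_two_mul s h₂.ne', hs]
  have first_level : (s * a₁) ^ 2 / (2 * a₁) ≤ 1 / 2 * log 2 := by
    rw [energy₁, mul_comm (1 / 2)]
    gcongr
    linarith
  have total : (s * a₁) ^ 2 / (2 * a₁) + (s * a₂) ^ 2 / (2 * a₂) ≤ log 2 := by
    rw [energy₁, energy₂, ← mul_add, hsum, mul_one]
  have value : s * a₁ + s * a₂ = s := by
    rw [← mul_add, hsum, mul_one]
  refine ⟨⟨⟨_, _, value.symm, first_level, total⟩, ?_⟩, first_level, total, value⟩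
  rintro _ ⟨l₁, l₂, rfl, -, h⟩
  exact add_le_sqrt_of_sq_div_add_sq_div_le h₁ h₂ hsum h
end

section
/- For $K \in \mathbb{N}$, $K \ge 1$, the supremum of $\sum_{j=1}^K \lambda_j$ over $(\lambda_1,\dots,\lambda_K) \in \mathbb{R}^K$ subject to $\sum_{j=1}^L \frac{K \lambda_j^2}{2} \le \frac{L}{K}\log 2$ for every $L = 1,\dots,K$, equals $\sqrt{2\log 2}$, attained at $\lambda_j = \sqrt{2\log 2}/K$ for all $j$. -/
open Real Finset

/-! The constraint at level `L = K` alone already gives `K ∑ λⱼ² ≤ 2 log 2`, and Cauchy–Schwarz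
turns it into `(∑ λⱼ)² ≤ 2 log 2`. The uniform profile `λⱼ = √(2 log 2)/K` meets every cumulative
constraint with equality, so the bound is attained. -/

theorem Finset.sum_le_sqrt_of_card_mul_sum_sq_le {ι : Type*} (s : Finset ι) (f : ι → ℝ) {M : ℝ}
    (h : #s * ∑ i ∈ s, f i ^ 2 ≤ M) : ∑ i ∈ s, f i ≤ √M :=
  Real.le_sqrt_of_sq_le (sq_sum_le_card_mul_sum_sq.trans h)

theorem sum_uniform_div_card {K : ℕ} (hK : K ≠ 0) (c : ℝ) : ∑ _j : Fin K, c / K = c := by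
  rw [sum_const, card_univ, Fintype.card_fin, nsmul_eq_mul]
  field_simp

theorem sum_filter_val_lt_uniform_profile {K L : ℕ} (hK : K ≠ 0) (hLK : L ≤ K) :
    ∑ _j ∈ univ.filter (fun j : Fin K => (j : ℕ) < L), (K : ℝ) * (√(2 * log 2) / K) ^ 2 / 2
      = (L / K) * log 2 := by
  have hc : √(2 * log 2) ^ 2 = 2 * log 2 := sq_sqrt (by positivity)
  rw [sum_const, Fin.card_filter_val_lt, min_eq_right hLK, nsmul_eq_mul, div_pow, hc]
  field_simp

theorem sum_le_sqrt_of_full_level_constraint {K : ℕ} (lam : Fin K → ℝ)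
    (h : ∑ j, (K : ℝ) * lam j ^ 2 / 2 ≤ log 2) : ∑ j, lam j ≤ √(2 * log 2) := by
  refine sum_le_sqrt_of_card_mul_sum_sq_le _ _ ?_
  rw [card_univ, Fintype.card_fin, mul_sum]
  rw [← sum_div, div_le_iff₀ two_pos] at h
  linarith

/-- Critical GREM(K) variational principle: the supremum of `∑ λⱼ` under the
cumulative constraints `∑_{j<L} K λⱼ²/2 ≤ (L/K) log 2` equals `√(2 log 2)`,
attained at `λⱼ = √(2 log 2)/K` for all `j`. -/
theorem stmt6 (K : ℕ) (hK : 1 ≤ K) :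
    IsGreatest {s : ℝ | ∃ lam : Fin K → ℝ, s = ∑ j, lam j ∧
        ∀ L : ℕ, 1 ≤ L → L ≤ K →
          ∑ j ∈ Finset.univ.filter (fun j : Fin K => (j : ℕ) < L),
              (K : ℝ) * (lam j) ^ 2 / 2 ≤ ((L : ℝ) / K) * Real.log 2}
      (Real.sqrt (2 * Real.log 2))
    ∧ ((∑ _j : Fin K, Real.sqrt (2 * Real.log 2) / K = Real.sqrt (2 * Real.log 2))
      ∧ ∀ L : ℕ, 1 ≤ L → L ≤ K →
          ∑ j ∈ Finset.univ.filter (fun j : Fin K => (j : ℕ) < L),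
              (K : ℝ) * (Real.sqrt (2 * Real.log 2) / K) ^ 2 / 2
            ≤ ((L : ℝ) / K) * Real.log 2) := by
  have hK0 : K ≠ 0 := by omega
  have hsum := sum_uniform_div_card hK0 √(2 * log 2)
  have hcons : ∀ L : ℕ, 1 ≤ L → L ≤ K → _ := fun L _ hLK =>
    (sum_filter_val_lt_uniform_profile hK0 hLK).le
  refine ⟨⟨⟨fun _ => √(2 * log 2) / K, hsum.symm, hcons⟩, ?_⟩, hsum, hcons⟩
  rintro s ⟨lam, rfl, hlam⟩
  have hfull : ∑ j, (K : ℝ) * lam j ^ 2 / 2 ≤ log 2 := by simpa [hK0] using hlam K hK le_rfl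
  exact sum_le_sqrt_of_full_level_constraint lam hfull
end
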